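/- arXiv:2102.00505 — 4 statements merged into one kernel-verified Lean document; each statement's English description precedes it below -/
import Mathlib

section
/- Let n ≥ 6 be even, p an odd prime, and k ≥ 2 an integer. Suppose φ(p^k) < ⌈log₂ n⌉, p^k divides n, and 2 is a primitive root modulo p^k. Then the set D = {l·p^k : 0 ≤ l ≤ n/p^k − 1} ∪ {l·p^k − 1 : 1 ≤ l ≤ n/p^k} is a dominating set of the Knödel graph KG_n, and hence γ(KG_n) ≤ 2n/p^k. -/
/-!
Reduce modulo `q = p ^ k` along the surjection `ZMod n → ZMod q`: the set `D` contains the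
preimage of `{0, -1}` and has at most `2n/q` elements. As `p` cannot divide both `a` and
`a + 1`, one of them is a unit modulo `p ^ k`, and since `2` generates the units it equals
`2 ^ t` with `1 ≤ t ≤ φ(p ^ k) ≤ ⌊log₂ n⌋`. For `a ≡ x (mod q)`, the vertex `y = 2 ^ t - 1 - x` is then a
Knödel neighbour of `x` with `y ≡ 0` or `y ≡ -1 (mod q)`, so `y ∈ D`.
-/

/-- The Knödel graph on `n` vertices (for even `n ≥ 6`): `x ~ y` iff
`x + y ≡ 2^t - 1 (mod n)` for some `1 ≤ t ≤ ⌊log₂ n⌋`. -/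
def knodel (n : ℕ) : SimpleGraph (ZMod n) where
  Adj x y := x ≠ y ∧ ∃ t : ℕ, 1 ≤ t ∧ t ≤ Nat.log 2 n ∧ x + y = 2 ^ t - 1
  symm := by
    constructor
    rintro x y ⟨hxy, t, h1, h2, h3⟩
    exact ⟨hxy.symm, t, h1, h2, by rw [add_comm]; exact h3⟩
  loopless := ⟨fun x h => h.1 rfl⟩

/-- The domination number of a finite graph. -/
noncomputable def dominationNumber {V : Type*} [Fintype V] (G : SimpleGraph V) : ℕ :=
  sInf {k | ∃ D : Finset V, (∀ v, v ∉ D → ∃ u ∈ D, G.Adj u v) ∧ D.card = k}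

open scoped Nat

theorem ZMod.isUnit_or_isUnit_add_one_of_prime_pow {p : ℕ} (hp : p.Prime) (k : ℕ)
    (a : ZMod (p ^ k)) : IsUnit a ∨ IsUnit (a + 1) := by
  rcases k.eq_zero_or_pos with rfl | hk
  · exact .inl (isUnit_of_subsingleton (M := ZMod 1) a)
  have : NeZero (p ^ k) := ⟨pow_ne_zero k hp.ne_zero⟩
  rw [← ZMod.natCast_zmod_val a, ← Nat.cast_succ, ZMod.isUnit_natCast_iff_not_dvd_pow hp hk,
    ZMod.isUnit_natCast_iff_not_dvd_pow hp hk, ← not_and_or]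
  exact fun ⟨h, h'⟩ => hp.one_lt.ne' (Nat.dvd_one.mp ((Nat.dvd_add_right h).mp h'))

theorem exists_pow_eq_of_orderOf_eq_card_units {M : Type*} [Monoid M] [Finite Mˣ] {g : M}
    (hg : orderOf g = Nat.card Mˣ) {v : M} (hv : IsUnit v) :
    ∃ t, 1 ≤ t ∧ t ≤ orderOf g ∧ g ^ t = v := by
  have hg_pos : 0 < orderOf g := hg ▸ Nat.card_pos
  obtain ⟨m, hm⟩ : ∃ m, g ^ m = v := by
    obtain ⟨u, rfl⟩ := (orderOf_pos_iff.mp hg_pos).isUnit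
    have hu_top : Subgroup.zpowers u = ⊤ :=
      Subgroup.eq_top_of_card_eq _ (by rw [Nat.card_zpowers, ← orderOf_units, hg])
    obtain ⟨m, hm⟩ := (Submonoid.mem_powers_iff _ _).mp <|
      mem_powers_iff_mem_zpowers.mpr (hu_top ▸ Subgroup.mem_top hv.unit)
    exact ⟨m, by simpa using congrArg Units.val hm⟩
  rw [← pow_mod_orderOf] at hm
  rcases hr : m % orderOf g with _ | r
  · exact ⟨orderOf g, hg_pos, le_rfl, by rw [pow_orderOf_eq_one, ← hm, hr, pow_zero]⟩
  · exact ⟨r + 1, by omega, hr ▸ (Nat.mod_lt m hg_pos).le, hr ▸ hm⟩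

theorem ZMod.exists_pow_eq_or_eq_add_one {p k : ℕ} (hp : p.Prime) {g : ZMod (p ^ k)}
    (hg : orderOf g = φ (p ^ k)) (a : ZMod (p ^ k)) :
    ∃ t, 1 ≤ t ∧ t ≤ φ (p ^ k) ∧ (g ^ t = a ∨ g ^ t = a + 1) := by
  have : NeZero (p ^ k) := ⟨pow_ne_zero k hp.ne_zero⟩
  have hg' : orderOf g = Nat.card (ZMod (p ^ k))ˣ := by
    rw [hg, Nat.card_eq_fintype_card, ZMod.card_units_eq_totient]
  rw [← hg]
  rcases ZMod.isUnit_or_isUnit_add_one_of_prime_pow hp k a with ha | ha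
  · obtain ⟨t, ht1, htg, rfl⟩ := exists_pow_eq_of_orderOf_eq_card_units hg' ha
    exact ⟨t, ht1, htg, .inl rfl⟩
  · obtain ⟨t, ht1, htg, hta⟩ := exists_pow_eq_of_orderOf_eq_card_units hg' ha
    exact ⟨t, ht1, htg, .inr hta⟩

theorem ZMod.exists_lt_div_eq_natCast_mul_of_castHom_eq_zero {n q : ℕ} [NeZero n] (hq : q ∣ n)
    {y : ZMod n} (hy : ZMod.castHom hq (ZMod q) y = 0) :
    ∃ l < n / q, y = ((l * q : ℕ) : ZMod n) := by
  rw [ZMod.castHom_apply, ZMod.cast_eq_val, ZMod.natCast_eq_zero_iff] at hy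
  obtain ⟨l, hl⟩ := hy
  refine ⟨l, ?_, by rw [mul_comm, ← hl, ZMod.natCast_zmod_val]⟩
  have hqn : q * l < q * (n / q) := by rw [← hl, Nat.mul_div_cancel' hq]; exact ZMod.val_lt y
  exact Nat.lt_of_mul_lt_mul_left hqn

def knodelDominatingSet (n q : ℕ) : Set (ZMod n) :=
  {x | ∃ l : ℕ, l ≤ n / q - 1 ∧ x = ((l * q : ℕ) : ZMod n)} ∪
    {x | ∃ l : ℕ, 1 ≤ l ∧ l ≤ n / q ∧ x = ((l * q : ℕ) : ZMod n) - 1}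

theorem mem_knodelDominatingSet_of_castHom {n q : ℕ} [NeZero n] (hq : q ∣ n) {x : ZMod n}
    (hx : ZMod.castHom hq (ZMod q) x = 0 ∨ ZMod.castHom hq (ZMod q) x = -1) :
    x ∈ knodelDominatingSet n q := by
  rcases hx with hx | hx
  · obtain ⟨l, hl, rfl⟩ := ZMod.exists_lt_div_eq_natCast_mul_of_castHom_eq_zero hq hx
    exact .inl ⟨l, by omega, rfl⟩
  · have hx1 : ZMod.castHom hq (ZMod q) (x + 1) = 0 := by rw [map_add, hx, map_one, neg_add_cancel]
    obtain ⟨l, hl, hxl⟩ := ZMod.exists_lt_div_eq_natCast_mul_of_castHom_eq_zero hq hx1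
    rcases l.eq_zero_or_pos with rfl | hl0
    · refine .inr ⟨n / q, by omega, le_rfl, ?_⟩
      rw [Nat.div_mul_cancel hq, ZMod.natCast_self, eq_sub_of_add_eq hxl]
      simp
    · exact .inr ⟨l, hl0, hl.le, eq_sub_of_add_eq hxl⟩

theorem ncard_knodelDominatingSet_le {n q : ℕ} [NeZero n] (hq : q ∣ n) :
    (knodelDominatingSet n q).ncard ≤ 2 * n / q := by
  have hpos : 0 < n / q :=
    Nat.div_pos (Nat.le_of_dvd (NeZero.pos n) hq) (Nat.pos_of_dvd_of_pos hq (NeZero.pos n))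
  have hsub : knodelDominatingSet n q ⊆
      ↑((Finset.range (n / q)).image (fun l => ((l * q : ℕ) : ZMod n)) ∪
        (Finset.Icc 1 (n / q)).image (fun l => ((l * q : ℕ) : ZMod n) - 1)) := by
    rintro x (⟨l, hl, rfl⟩ | ⟨l, hl1, hl2, rfl⟩)
    · exact Finset.mem_union_left _ (Finset.mem_image_of_mem _ (Finset.mem_range.mpr (by omega)))
    · exact Finset.mem_union_right _ (Finset.mem_image_of_mem _ (Finset.mem_Icc.mpr ⟨hl1, hl2⟩))
  calc (knodelDominatingSet n q).ncard ≤ _ := Set.ncard_le_ncard hsub (Finset.finite_toSet _)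
    _ ≤ n / q + n / q := by
      rw [Set.ncard_coe_finset]
      refine (Finset.card_union_le _ _).trans (add_le_add ?_ ?_) <;>
        exact Finset.card_image_le.trans (by simp)
    _ = 2 * n / q := by rw [Nat.mul_div_assoc 2 hq]; ring

theorem dominationNumber_le_ncard {V : Type*} [Fintype V] {G : SimpleGraph V} {D : Set V}
    (hD : ∀ v ∉ D, ∃ u ∈ D, G.Adj u v) : dominationNumber G ≤ D.ncard := by
  classical
  exact Nat.sInf_le ⟨D.toFinset, by simpa using hD, (Set.ncard_eq_toFinset_card' D).symm⟩

theorem knodelDominatingSet_dominates {n p k : ℕ} [NeZero n] (hp : p.Prime) (hdvd : p ^ k ∣ n)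
    (hprim : orderOf (2 : ZMod (p ^ k)) = φ (p ^ k)) (hlog : φ (p ^ k) ≤ Nat.log 2 n)
    (x : ZMod n) (hx : x ∉ knodelDominatingSet n (p ^ k)) :
    ∃ y ∈ knodelDominatingSet n (p ^ k), (knodel n).Adj y x := by
  obtain ⟨t, ht1, htφ, ht⟩ :=
    ZMod.exists_pow_eq_or_eq_add_one hp hprim (ZMod.castHom hdvd (ZMod (p ^ k)) x)
  have hy : 2 ^ t - 1 - x ∈ knodelDominatingSet n (p ^ k) := by
    apply mem_knodelDominatingSet_of_castHom hdvd
    rw [map_sub, map_sub, map_pow, map_ofNat, map_one]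
    rcases ht with h | h <;> rw [h]
    · exact .inr (by ring)
    · exact .inl (by ring)
  exact ⟨_, hy, fun h => hx (h ▸ hy), t, ht1, htφ.trans hlog, sub_add_cancel _ _⟩

theorem stmt_1_general (n p k : ℕ) [NeZero n] (hp : p.Prime)
    (hphi : Nat.totient (p ^ k) < Nat.clog 2 n) (hpdvd : p ^ k ∣ n)
    (hprim : orderOf (2 : ZMod (p ^ k)) = Nat.totient (p ^ k)) :
    (∀ x : ZMod n,
        x ∉ ({x : ZMod n | ∃ l : ℕ, l ≤ n / p ^ k - 1 ∧ x = ((l * p ^ k : ℕ) : ZMod n)} ∪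
             {x : ZMod n | ∃ l : ℕ, 1 ≤ l ∧ l ≤ n / p ^ k ∧
                x = ((l * p ^ k : ℕ) : ZMod n) - 1}) →
        ∃ y ∈ ({x : ZMod n | ∃ l : ℕ, l ≤ n / p ^ k - 1 ∧ x = ((l * p ^ k : ℕ) : ZMod n)} ∪
             {x : ZMod n | ∃ l : ℕ, 1 ≤ l ∧ l ≤ n / p ^ k ∧
                x = ((l * p ^ k : ℕ) : ZMod n) - 1}), (knodel n).Adj y x) ∧
    dominationNumber (knodel n) ≤ 2 * n / p ^ k := by
  have hlog : φ (p ^ k) ≤ Nat.log 2 n := by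
    have hclog : Nat.clog 2 n ≤ Nat.log 2 n + 1 :=
      (Nat.clog_le_iff_le_pow one_lt_two).mpr (Nat.lt_pow_succ_log_self one_lt_two n).le
    omega
  have hdom := knodelDominatingSet_dominates hp hpdvd hprim hlog
  exact ⟨hdom, (dominationNumber_le_ncard hdom).trans (ncard_knodelDominatingSet_le hpdvd)⟩

theorem stmt_1 (n p k : ℕ) [NeZero n] (hn6 : 6 ≤ n) (hne : Even n) (hp : p.Prime) (hpodd : Odd p)
    (hk : 2 ≤ k) (hphi : Nat.totient (p ^ k) < Nat.clog 2 n) (hpdvd : p ^ k ∣ n)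
    (hprim : orderOf (2 : ZMod (p ^ k)) = Nat.totient (p ^ k)) :
    (∀ x : ZMod n,
        x ∉ ({x : ZMod n | ∃ l : ℕ, l ≤ n / p ^ k - 1 ∧ x = ((l * p ^ k : ℕ) : ZMod n)} ∪
             {x : ZMod n | ∃ l : ℕ, 1 ≤ l ∧ l ≤ n / p ^ k ∧
                x = ((l * p ^ k : ℕ) : ZMod n) - 1}) →
        ∃ y ∈ ({x : ZMod n | ∃ l : ℕ, l ≤ n / p ^ k - 1 ∧ x = ((l * p ^ k : ℕ) : ZMod n)} ∪
             {x : ZMod n | ∃ l : ℕ, 1 ≤ l ∧ l ≤ n / p ^ k ∧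
                x = ((l * p ^ k : ℕ) : ZMod n) - 1}), (knodel n).Adj y x) ∧
    dominationNumber (knodel n) ≤ 2 * n / p ^ k :=
  stmt_1_general n p k hp hphi hpdvd hprim
end

section
/- Let n ≥ 6 be even and suppose n has a prime factor p with 3 < p ≤ ⌈log₂ n⌉ such that 2 is a primitive root modulo p. Then γ(KG_n) ≤ n/p < n/4. -/
open Finset

theorem IsPrimitiveRoot.exists_pos_pow_eq_of_pow_eq_one {R : Type*} [CommRing R] [IsDomain R]
    {k : ℕ} [NeZero k] {ζ ξ : R} (h : IsPrimitiveRoot ζ k) (hξ : ξ ^ k = 1) :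
    ∃ t, 1 ≤ t ∧ t ≤ k ∧ ζ ^ t = ξ := by
  obtain ⟨i, hik, rfl⟩ := h.eq_pow_of_pow_eq_one hξ
  rcases Nat.eq_zero_or_pos i with rfl | hi
  · exact ⟨k, Nat.one_le_iff_ne_zero.mpr (NeZero.ne k), le_rfl, by rw [h.pow_eq_one, pow_zero]⟩
  · exact ⟨i, hi, hik.le, rfl⟩

theorem ZMod.card_castHom_fiber {n p : ℕ} [NeZero n] [NeZero p] (hpn : p ∣ n) (c : ZMod p) :
    #{x : ZMod n | ZMod.castHom hpn (ZMod p) x = c} = n / p := by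
  set f := ZMod.castHom hpn (ZMod p)
  have hfiber : ∀ y, #{x | f x = y} = #{x | f x = c} := fun y =>
    AddMonoidHom.card_fiber_eq_of_mem_range f (ZMod.castHom_surjective hpn y)
      (ZMod.castHom_surjective hpn c)
  have hsum : n = p * #{x | f x = c} := by
    calc n = #(univ : Finset (ZMod n)) := by rw [card_univ, ZMod.card]
      _ = ∑ y : ZMod p, #{x | f x = y} := card_eq_sum_card_fiberwise fun _ _ => mem_univ _
      _ = p * #{x | f x = c} := by simp only [hfiber, sum_const, card_univ, ZMod.card, smul_eq_mul]
  exact (Nat.div_eq_of_eq_mul_right (Nat.pos_of_neZero p) hsum).symm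

theorem dominationNumber_le_card {V : Type*} [Fintype V] (G : SimpleGraph V) (D : Finset V)
    (hD : ∀ v, v ∉ D → ∃ u ∈ D, G.Adj u v) : dominationNumber G ≤ #D :=
  Nat.sInf_le ⟨D, hD, rfl⟩

theorem knodel_exists_adj_of_castHom_ne {n p : ℕ} [Fact p.Prime] (hpn : p ∣ n)
    (hprim : orderOf (2 : ZMod p) = p - 1) (hlog : p - 1 ≤ Nat.log 2 n) (v : ZMod n)
    (hv : ZMod.castHom hpn (ZMod p) v ≠ -2⁻¹) :
    ∃ u, ZMod.castHom hpn (ZMod p) u = -2⁻¹ ∧ (knodel n).Adj u v := by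
  set f := ZMod.castHom hpn (ZMod p)
  have : NeZero (p - 1) := ⟨by have := (Fact.out : p.Prime).two_le; omega⟩
  have h2 : IsPrimitiveRoot (2 : ZMod p) (p - 1) := hprim ▸ IsPrimitiveRoot.orderOf 2
  have h2inv : (2 : ZMod p) * 2⁻¹ = 1 := mul_inv_cancel₀ (h2.ne_zero (NeZero.ne _))
  have hw : f v + 2⁻¹ ≠ 0 := fun h => hv (eq_neg_of_add_eq_zero_left h)
  obtain ⟨t, ht1, htp, h2t⟩ := h2.exists_pos_pow_eq_of_pow_eq_one (ZMod.pow_card_sub_one_eq_one hw)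
  have hfu : f (2 ^ t - 1 - v) = -2⁻¹ := by
    rw [map_sub, map_sub, map_pow, map_one, map_ofNat, h2t]
    linear_combination h2inv
  refine ⟨2 ^ t - 1 - v, hfu, fun huv => hv (huv ▸ hfu), t, ht1, htp.trans hlog, by ring⟩

theorem div_lt_div_four_of_dvd {n p : ℕ} (hp : 5 ≤ p) (hodd : Odd p) (hpn : p ∣ n)
    (hn : Even n) (h16 : 16 < n) : n / p < n / 4 := by
  obtain ⟨m, rfl⟩ := hpn
  obtain ⟨k, rfl⟩ := (Nat.even_mul.mp hn).resolve_left (Nat.not_even_iff_odd.mpr hodd)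
  rw [Nat.mul_div_cancel_left _ (by omega)]
  rcases hp.eq_or_lt with rfl | hp5
  · omega
  · have h7 : 7 ≤ p := by obtain ⟨j, rfl⟩ := hodd; omega
    have : 7 * (k + k) ≤ p * (k + k) := Nat.mul_le_mul_right _ h7
    omega

theorem knodel_dominationNumber_le_div {n p : ℕ} [NeZero n] [Fact p.Prime] (hpn : p ∣ n)
    (hprim : orderOf (2 : ZMod p) = p - 1) (hlog : p - 1 ≤ Nat.log 2 n) :
    dominationNumber (knodel n) ≤ n / p :=
  calc dominationNumber (knodel n)
      ≤ #{x : ZMod n | ZMod.castHom hpn (ZMod p) x = -2⁻¹} := by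
        refine dominationNumber_le_card _ _ fun v hv => ?_
        obtain ⟨u, hu, hadj⟩ := knodel_exists_adj_of_castHom_ne hpn hprim hlog v
          (by simpa only [mem_filter, mem_univ, true_and] using hv)
        exact ⟨u, by simpa only [mem_filter, mem_univ, true_and] using hu, hadj⟩
    _ = n / p := ZMod.card_castHom_fiber hpn _

theorem stmt_2_general (n p : ℕ) [NeZero n] (hne : Even n) (hp : p.Prime)
    (hp3 : 3 < p) (hple : p ≤ Nat.clog 2 n) (hpdvd : p ∣ n)
    (hprim : orderOf (2 : ZMod p) = p - 1) :
    dominationNumber (knodel n) ≤ n / p ∧ n / p < n / 4 := by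
  have : Fact p.Prime := ⟨hp⟩
  have hpow : 2 ^ (p - 1) < n := (Nat.lt_clog_iff_pow_lt one_lt_two).mp (by omega)
  have hlog : p - 1 ≤ Nat.log 2 n := (Nat.le_log_iff_pow_le one_lt_two (NeZero.ne n)).mpr hpow.le
  have hp5 : 5 ≤ p := by
    rcases hp.eq_two_or_odd' with rfl | ⟨k, rfl⟩ <;> omega
  have h16 : 16 < n :=
    calc 16 = 2 ^ 4 := rfl
      _ ≤ 2 ^ (p - 1) := Nat.pow_le_pow_right two_pos (by omega)
      _ < n := hpow
  exact ⟨knodel_dominationNumber_le_div hpdvd hprim hlog,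
    div_lt_div_four_of_dvd hp5 (hp.odd_of_ne_two (by omega)) hpdvd hne h16⟩

theorem stmt_2 (n p : ℕ) [NeZero n] (hn6 : 6 ≤ n) (hne : Even n) (hp : p.Prime)
    (hp3 : 3 < p) (hple : p ≤ Nat.clog 2 n) (hpdvd : p ∣ n)
    (hprim : orderOf (2 : ZMod p) = p - 1) :
    dominationNumber (knodel n) ≤ n / p ∧ n / p < n / 4 :=
  stmt_2_general n p hne hp hp3 hple hpdvd hprim
end

section
/- Let G be a k-regular bipartite graph on n vertices with k ≥ 2 and suppose (k + 1) divides n. If γ(G) = n/(k + 1), then n/(k + 1) is even; moreover, for every minimum dominating set D and any bipartition (X, Y) of G, |D ∩ X| = |D ∩ Y|. -/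
open Finset

theorem Finset.card_inter_add_card_inter {V : Type*} [Fintype V] [DecidableEq V] (D : Finset V)
    {X Y : Finset V} (hdisj : Disjoint X Y) (hunion : X ∪ Y = univ) :
    #(D ∩ X) + #(D ∩ Y) = #D := by
  rw [← card_union_of_disjoint (hdisj.mono inter_subset_right inter_subset_right),
    ← inter_union_distrib_left, hunion, inter_univ]

namespace SimpleGraph

variable {V : Type*} {G : SimpleGraph V} {X Y : Finset V}

def IsDominatingSet (G : SimpleGraph V) (D : Finset V) : Prop :=
  ∀ v, v ∉ D → ∃ u ∈ D, G.Adj u v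

theorem exists_isDominatingSet_card_eq_dominationNumber [Fintype V] (G : SimpleGraph V) :
    ∃ D : Finset V, G.IsDominatingSet D ∧ #D = dominationNumber G :=
  Nat.sInf_mem (s := {m | ∃ D : Finset V, G.IsDominatingSet D ∧ #D = m})
    ⟨_, univ, fun v hv => absurd (mem_univ v) hv, rfl⟩

theorem isBipartiteWith_of_mem_iff_mem [Fintype V] [DecidableEq V]
    (hdisj : Disjoint X Y) (hunion : X ∪ Y = univ) (hadj : ∀ u v, G.Adj u v → (u ∈ X ↔ v ∈ Y)) :
    G.IsBipartiteWith X Y where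
  disjoint := disjoint_coe.mpr hdisj
  mem_of_adj u v huv := by
    have hu := hunion ▸ mem_univ u
    have hv := hunion ▸ mem_univ v
    have hXY := hadj u v huv
    simp only [mem_coe]
    rw [mem_union] at hu hv
    by_cases huX : u ∈ X
    · exact Or.inl ⟨huX, hXY.mp huX⟩
    · exact Or.inr ⟨hu.resolve_left huX, hv.resolve_right (mt hXY.mpr huX)⟩

variable {k : ℕ}

theorem IsBipartiteWith.card_eq_of_isRegularOfDegree [Fintype V] [DecidableRel G.Adj]
    (hbip : G.IsBipartiteWith X Y) (hreg : G.IsRegularOfDegree k) (hk : 0 < k) : #X = #Y := by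
  have hsum := isBipartiteWith_sum_degrees_eq hbip
  simp only [hreg.degree_eq, sum_const, smul_eq_mul] at hsum
  exact Nat.eq_of_mul_eq_mul_right hk hsum

theorem IsDominatingSet.card_le_card_inter_add_mul [Fintype V] [DecidableEq V]
    [DecidableRel G.Adj] {D : Finset V} (hD : G.IsDominatingSet D)
    (hdeg : ∀ v, G.degree v ≤ k) (hbip : G.IsBipartiteWith X Y) :
    #X ≤ #(D ∩ X) + k * #(D ∩ Y) := by
  have hcover : X ⊆ (D ∩ X) ∪ (D ∩ Y).biUnion (fun u => G.neighborFinset u) := by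
    intro v hv
    by_cases hvD : v ∈ D
    · exact mem_union_left _ (mem_inter.mpr ⟨hvD, hv⟩)
    · obtain ⟨u, huD, huv⟩ := hD v hvD
      have huY : u ∈ Y := hbip.mem_of_mem_adj (mem_coe.mpr hv) huv.symm
      exact mem_union_right _ (mem_biUnion.mpr ⟨u, mem_inter.mpr ⟨huD, huY⟩, by simpa using huv⟩)
  calc #X ≤ #((D ∩ X) ∪ (D ∩ Y).biUnion (fun u => G.neighborFinset u)) := card_le_card hcover
    _ ≤ #(D ∩ X) + ∑ u ∈ D ∩ Y, #(G.neighborFinset u) :=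
        (card_union_le _ _).trans (Nat.add_le_add_left card_biUnion_le _)
    _ ≤ #(D ∩ X) + ∑ _u ∈ D ∩ Y, k := by
        gcongr with u
        rw [card_neighborFinset_eq_degree]
        exact hdeg u
    _ = #(D ∩ X) + k * #(D ∩ Y) := by rw [sum_const, smul_eq_mul, mul_comm]

theorem IsDominatingSet.card_inter_eq_of_card_eq_mul [Fintype V] [DecidableEq V]
    [DecidableRel G.Adj] {D : Finset V} (hD : G.IsDominatingSet D)
    (hreg : G.IsRegularOfDegree k) (hk : 2 ≤ k) (hbip : G.IsBipartiteWith X Y)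
    (hunion : X ∪ Y = univ) (hcard : Fintype.card V = (k + 1) * #D) :
    #(D ∩ X) = #(D ∩ Y) := by
  have hdisj : Disjoint X Y := disjoint_coe.mp hbip.disjoint
  have hdeg : ∀ v, G.degree v ≤ k := fun v => (hreg.degree_eq v).le
  have hX := hD.card_le_card_inter_add_mul hdeg hbip
  have hY := hD.card_le_card_inter_add_mul hdeg hbip.symm
  have hXY : #X = #Y := hbip.card_eq_of_isRegularOfDegree hreg (by omega)
  have hV : #X + #Y = Fintype.card V := by rw [← card_union_of_disjoint hdisj, hunion, card_univ]
  rw [← Finset.card_inter_add_card_inter D hdisj hunion] at hcard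
  have hzero : ((k : ℤ) - 1) * (#(D ∩ X) - #(D ∩ Y)) = 0 := by
    zify at hX hY hXY hV hcard
    nlinarith
  rcases mul_eq_zero.mp hzero with h | h <;> omega

end SimpleGraph

open SimpleGraph in
theorem stmt_5 {V : Type*} [Fintype V] [DecidableEq V] (G : SimpleGraph V) [DecidableRel G.Adj] (k : ℕ)
    (hk : 2 ≤ k) (hreg : G.IsRegularOfDegree k)
    (hbip : ∃ X Y : Finset V, Disjoint X Y ∧ X ∪ Y = Finset.univ ∧
      ∀ u v, G.Adj u v → (u ∈ X ↔ v ∈ Y))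
    (hdvd : (k + 1) ∣ Fintype.card V)
    (hgam : dominationNumber G = Fintype.card V / (k + 1)) :
    Even (Fintype.card V / (k + 1)) ∧
    ∀ D : Finset V, (∀ v, v ∉ D → ∃ u ∈ D, G.Adj u v) →
      D.card = dominationNumber G →
      ∀ X Y : Finset V, Disjoint X Y → X ∪ Y = Finset.univ →
        (∀ u v, G.Adj u v → (u ∈ X ↔ v ∈ Y)) →
        (D ∩ X).card = (D ∩ Y).card := by
  have balanced : ∀ D : Finset V, G.IsDominatingSet D → #D = dominationNumber G →
      ∀ X Y : Finset V, Disjoint X Y → X ∪ Y = univ → (∀ u v, G.Adj u v → (u ∈ X ↔ v ∈ Y)) →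
        #(D ∩ X) = #(D ∩ Y) := by
    intro D hD hcard X Y hdisj hunion hadj
    refine hD.card_inter_eq_of_card_eq_mul hreg hk
      (isBipartiteWith_of_mem_iff_mem hdisj hunion hadj) hunion ?_
    rw [hcard, hgam, Nat.mul_div_cancel' hdvd]
  refine ⟨?_, balanced⟩
  obtain ⟨X, Y, hdisj, hunion, hadj⟩ := hbip
  obtain ⟨D, hD, hcard⟩ := G.exists_isDominatingSet_card_eq_dominationNumber
  rw [← hgam, ← hcard, ← Finset.card_inter_add_card_inter D hdisj hunion,
    balanced D hD hcard X Y hdisj hunion hadj]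
  exact ⟨_, rfl⟩
end

section
/- Let G be a k-regular bipartite graph on n vertices with k ≥ 2, and suppose n = 2j(k + 1) + r for integers j ≥ 0 and 4 ≤ r < k + 1. Then γ(G) > 2j + 1 = ⌈n/(k + 1)⌉. -/
/-!
Let `D` be a minimum dominating set and `X`, `Y` the two sides, each of size `n / 2` by
regularity. A vertex of `Y` outside `D` is dominated from `D ∩ X`, so
`#Y ≤ #(D ∩ Y) + k * #(D ∩ X) = #(D ∩ X) + #(D ∩ Y) + (k - 1) * #(D ∩ X)`, and symmetrically.
If `#D ≤ 2j + 1`, one side meets `D` in at most `j` vertices, whence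
`n / 2 ≤ 2j + 1 + (k - 1) j = j (k + 1) + 1`; but `n / 2 = j (k + 1) + r / 2 ≥ j (k + 1) + 2`.
-/

open Finset

namespace SimpleGraph

variable {V : Type*} (G : SimpleGraph V)

def IsDominating (D : Finset V) : Prop :=
  ∀ v, v ∉ D → ∃ u ∈ D, G.Adj u v

variable {G}

theorem exists_isDominating_card_eq_dominationNumber [Fintype V] :
    ∃ D : Finset V, G.IsDominating D ∧ #D = dominationNumber G :=
  Nat.sInf_mem (s := {m | ∃ D : Finset V, G.IsDominating D ∧ #D = m})
    ⟨_, univ, fun v hv => absurd (mem_univ v) hv, rfl⟩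

theorem isBipartiteWith_of_adj_mem_iff {X Y : Finset V} (hdisj : Disjoint X Y)
    (hcover : ∀ v, v ∈ X ∨ v ∈ Y) (hadj : ∀ u v, G.Adj u v → (u ∈ X ↔ v ∈ Y)) :
    G.IsBipartiteWith X Y where
  disjoint := by simpa using hdisj
  mem_of_adj u v huv := by
    simp only [mem_coe]
    rcases hcover u with hu | hu
    · exact .inl ⟨hu, (hadj u v huv).1 hu⟩
    · exact .inr ⟨hu, (hadj v u huv.symm).2 hu⟩

theorem IsRegularOfDegree.card_eq_of_isBipartiteWith [Fintype V] [DecidableRel G.Adj]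
    {k : ℕ} (hreg : G.IsRegularOfDegree k) (hk : k ≠ 0) {s t : Finset V}
    (h : G.IsBipartiteWith s t) : #s = #t := by
  have hsum := isBipartiteWith_sum_degrees_eq h
  simp only [hreg.degree_eq, sum_const, smul_eq_mul] at hsum
  exact Nat.eq_of_mul_eq_mul_right (Nat.pos_of_ne_zero hk) hsum

theorem IsDominating.card_le [Fintype V] [DecidableEq V] [DecidableRel G.Adj] {k : ℕ}
    (hdeg : ∀ v, G.degree v ≤ k) {s t D : Finset V} (h : G.IsBipartiteWith s t)
    (hD : G.IsDominating D) : #t ≤ #(D ∩ t) + k * #(D ∩ s) := by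
  have hcover : t ⊆ (D ∩ t) ∪ (D ∩ s).biUnion fun v => G.neighborFinset v := by
    intro y hy
    by_cases hyD : y ∈ D
    · exact mem_union_left _ (mem_inter.2 ⟨hyD, hy⟩)
    · obtain ⟨u, huD, huy⟩ := hD y hyD
      refine mem_union_right _ (mem_biUnion.2 ⟨u, mem_inter.2 ⟨huD, ?_⟩, by simpa using huy⟩)
      exact h.mem_of_mem_adj' (by simpa using hy) huy
  calc #t ≤ #(D ∩ t) + #((D ∩ s).biUnion fun v => G.neighborFinset v) :=
        (card_le_card hcover).trans (card_union_le _ _)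
    _ ≤ #(D ∩ t) + k * #(D ∩ s) := by
        gcongr
        refine (card_biUnion_le_card_mul _ _ k fun v _ => ?_).trans_eq (mul_comm _ _)
        simpa using hdeg v

-- `IsDominating.card_le`, applied on the side that contains at most `#D / 2` vertices of `D`.
theorem IsDominating.min_card_le [Fintype V] [DecidableEq V] [DecidableRel G.Adj] {k : ℕ}
    (hdeg : ∀ v, G.degree v ≤ k) {s t D : Finset V} (h : G.IsBipartiteWith s t)
    (hD : G.IsDominating D) : min #s #t ≤ #D + (k - 1) * (#D / 2) := by
  have hsplit : #(D ∩ s) + #(D ∩ t) ≤ #D := by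
    have hst : Disjoint s t := by simpa using h.disjoint
    rw [← card_union_of_disjoint (hst.mono inter_subset_right inter_subset_right)]
    exact card_le_card (union_subset inter_subset_left inter_subset_left)
  have hkmul : ∀ a, k * a ≤ a + (k - 1) * a := fun a => by
    rcases k with _ | k <;> simp [Nat.succ_mul, add_comm]
  rcases le_total #(D ∩ s) #(D ∩ t) with hst | hts
  · have ht := hD.card_le hdeg h
    have := hkmul #(D ∩ s)
    have := Nat.mul_le_mul_left (k - 1) (show #(D ∩ s) ≤ #D / 2 by omega)
    exact (min_le_right _ _).trans (by omega)
  · have hs := hD.card_le hdeg h.symm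
    have := hkmul #(D ∩ t)
    have := Nat.mul_le_mul_left (k - 1) (show #(D ∩ t) ≤ #D / 2 by omega)
    exact (min_le_left _ _).trans (by omega)

end SimpleGraph

open SimpleGraph

theorem stmt_6_general {V : Type*} [Fintype V] [DecidableEq V] (G : SimpleGraph V) [DecidableRel G.Adj] (k j r : ℕ)
    (hreg : G.IsRegularOfDegree k)
    (hbip : ∃ X Y : Finset V, Disjoint X Y ∧ X ∪ Y = Finset.univ ∧
      ∀ u v, G.Adj u v → (u ∈ X ↔ v ∈ Y))
    (hn : Fintype.card V = 2 * j * (k + 1) + r) (hr4 : 4 ≤ r) (hrk : r < k + 1) :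
    2 * j + 1 < dominationNumber G ∧
    2 * j + 1 = (Fintype.card V + k) / (k + 1) := by
  obtain ⟨X, Y, hdisj, hunion, hadj⟩ := hbip
  have hXY : G.IsBipartiteWith X Y := isBipartiteWith_of_adj_mem_iff hdisj
    (fun v => mem_union.1 (hunion ▸ mem_univ v)) hadj
  have hsides : #X = #Y := hreg.card_eq_of_isBipartiteWith (by omega) hXY
  have hcard : #X + #Y = Fintype.card V := by
    rw [← card_union_of_disjoint hdisj, hunion, card_univ]
  refine ⟨?_, (Nat.div_eq_of_lt_le (by linarith) (by linarith)).symm⟩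
  by_contra! hγ
  obtain ⟨D, hD, hDγ⟩ := exists_isDominating_card_eq_dominationNumber (G := G)
  have hmin := hD.min_card_le (fun v => (hreg.degree_eq v).le) hXY
  have hhalf : (k - 1) * (#D / 2) ≤ (k - 1) * j := Nat.mul_le_mul_left _ (by omega)
  have hkj : (k - 1) * j + 2 * j = j * (k + 1) := by
    rw [← add_mul, mul_comm]; congr 1; omega
  rw [← hsides, min_self] at hmin
  rw [mul_assoc] at hn
  omega

theorem stmt_6 {V : Type*} [Fintype V] [DecidableEq V] (G : SimpleGraph V) [DecidableRel G.Adj] (k j r : ℕ)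
    (hk : 2 ≤ k) (hreg : G.IsRegularOfDegree k)
    (hbip : ∃ X Y : Finset V, Disjoint X Y ∧ X ∪ Y = Finset.univ ∧
      ∀ u v, G.Adj u v → (u ∈ X ↔ v ∈ Y))
    (hn : Fintype.card V = 2 * j * (k + 1) + r) (hr4 : 4 ≤ r) (hrk : r < k + 1) :
    2 * j + 1 < dominationNumber G ∧
    2 * j + 1 = (Fintype.card V + k) / (k + 1) :=
  stmt_6_general G k j r hreg hbip hn hr4 hrk
end
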